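/- arXiv:2511.09824 — 13 statements merged into one kernel-verified Lean document; each statement's English description precedes it below -/
import Mathlib

section
/- Let H be a Heyting algebra and box : H → H a fronton operator on H. Then for every a ∈ H, the set F_a = {b ∈ H : (b ⇨ a) ≤ b} is a filter containing box a as its least element: ⊤ ∈ F_a, F_a is upward closed and closed under binary meets, (box a ⇨ a) ≤ box a, and box a ≤ b for every b ∈ H with (b ⇨ a) ≤ b. Moreover, ⊥ ∈ F_a only if H is trivial (⊥ = ⊤). -/
/-!
The frontal axiom `box a ≤ b ⊔ (b ⇨ a)` puts `box a` below every `b` with `(b ⇨ a) ≤ b`, and the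
Löb axiom together with `a ≤ box a` puts `box a` itself in that set. Since the set is upward closed,
closure under meets follows: `b ⊓ c` lies above its least element `box a`.
-/

section HeytingAlgebra

variable {H : Type*} [HeytingAlgebra H]

theorem himp_le_of_himp_le_of_le {a b c : H} (hb : (b ⇨ a) ≤ b) (hbc : b ≤ c) : (c ⇨ a) ≤ c :=
  (himp_le_himp_right hbc).trans (hb.trans hbc)

theorem bot_eq_top_of_bot_himp_le_bot {a : H} (h : ((⊥ : H) ⇨ a) ≤ ⊥) : (⊥ : H) = ⊤ :=
  top_le_iff.mp (bot_himp a ▸ h)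

variable (box : H → H)

theorem box_le_of_himp_le (hFront : ∀ a b : H, box a ≤ b ⊔ (b ⇨ a)) {a b : H}
    (hb : (b ⇨ a) ≤ b) : box a ≤ b :=
  (hFront a b).trans (sup_le le_rfl hb)

theorem box_himp_le_box (hIncr : ∀ a : H, a ≤ box a) (hLob : ∀ a : H, (box a ⇨ a) ≤ a) (a : H) :
    (box a ⇨ a) ≤ box a :=
  (hLob a).trans (hIncr a)

end HeytingAlgebra

theorem fronton_filter_least_general {H : Type*} [HeytingAlgebra H] (box : H → H)
    (hIncr : ∀ a : H, a ≤ box a)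
    (hFront : ∀ a b : H, box a ≤ b ⊔ (b ⇨ a))
    (hLob : ∀ a : H, (box a ⇨ a) ≤ a)
    (a : H) :
    (((⊤ : H) ⇨ a) ≤ ⊤)
    ∧ (∀ b c : H, (b ⇨ a) ≤ b → b ≤ c → (c ⇨ a) ≤ c)
    ∧ (∀ b c : H, (b ⇨ a) ≤ b → (c ⇨ a) ≤ c → ((b ⊓ c) ⇨ a) ≤ b ⊓ c)
    ∧ ((box a ⇨ a) ≤ box a)
    ∧ (∀ b : H, (b ⇨ a) ≤ b → box a ≤ b)
    ∧ (((⊥ : H) ⇨ a) ≤ ⊥ → (⊥ : H) = (⊤ : H)) := by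
  have box_mem : (box a ⇨ a) ≤ box a := box_himp_le_box box hIncr hLob a
  have box_least : ∀ b : H, (b ⇨ a) ≤ b → box a ≤ b := fun _ hb =>
    box_le_of_himp_le box hFront hb
  refine ⟨le_top, fun _ _ => himp_le_of_himp_le_of_le, ?_, box_mem, box_least,
    bot_eq_top_of_bot_himp_le_bot⟩
  intro b c hb hc
  exact himp_le_of_himp_le_of_le box_mem (le_inf (box_least b hb) (box_least c hc))

/-- For a fronton operator `box` on a Heyting algebra `H` and any `a : H`,
the set `F_a = {b | (b ⇨ a) ≤ b}` is a filter containing `box a` as its least element,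
and contains `⊥` only if `H` is trivial. -/
theorem fronton_filter_least {H : Type*} [HeytingAlgebra H] (box : H → H)
    (hTop : box ⊤ = ⊤)
    (hMeet : ∀ a b : H, box (a ⊓ b) = box a ⊓ box b)
    (hIncr : ∀ a : H, a ≤ box a)
    (hFront : ∀ a b : H, box a ≤ b ⊔ (b ⇨ a))
    (hLob : ∀ a : H, (box a ⇨ a) ≤ a)
    (a : H) :
    (((⊤ : H) ⇨ a) ≤ ⊤)
    ∧ (∀ b c : H, (b ⇨ a) ≤ b → b ≤ c → (c ⇨ a) ≤ c)
    ∧ (∀ b c : H, (b ⇨ a) ≤ b → (c ⇨ a) ≤ c → ((b ⊓ c) ⇨ a) ≤ b ⊓ c)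
    ∧ ((box a ⇨ a) ≤ box a)
    ∧ (∀ b : H, (b ⇨ a) ≤ b → box a ≤ b)
    ∧ (((⊥ : H) ⇨ a) ≤ ⊥ → (⊥ : H) = (⊤ : H)) :=
  fronton_filter_least_general box hIncr hFront hLob a
end

section
/- Let H be a Heyting algebra and m : H → H a map such that for every a ∈ H, m(a) is the least element of F_a, i.e. (m(a) ⇨ a) ≤ m(a), and m(a) ≤ b for every b ∈ H with (b ⇨ a) ≤ b. Then m is a fronton operator on H: for all a, b ∈ H, m(⊤) = ⊤, m(a ⊓ b) = m(a) ⊓ m(b), a ≤ m(a), m(a) ≤ b ⊔ (b ⇨ a), and (m(a) ⇨ a) ≤ a. -/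
/-! Every `b` with `(b ⇨ a) ≤ b` lies above `a`, and `b ⊔ (b ⇨ a)` is always such an element,
so leastness gives `a ≤ m a` and `m a ≤ b ⊔ (b ⇨ a)`. Applying the latter with `c = m (a ⊓ b)`
yields `m a ⊓ m b ≤ c ⊔ (c ⇨ a ⊓ b) ≤ c`. -/

section HeytingAlgebra

variable {H : Type*} [HeytingAlgebra H]

theorem le_of_himp_le_self {a b : H} (h : b ⇨ a ≤ b) : a ≤ b :=
  le_himp.trans h

theorem himp_le_of_himp_le_self {a b : H} (h : b ⇨ a ≤ b) : b ⇨ a ≤ a :=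
  calc b ⇨ a = b ⊓ (b ⇨ a) := (inf_eq_right.mpr h).symm
    _ = b ⊓ a := inf_himp _ _
    _ ≤ a := inf_le_right

theorem sup_himp_himp_le (a b : H) : (b ⊔ (b ⇨ a)) ⇨ a ≤ b ⊔ (b ⇨ a) :=
  calc (b ⊔ (b ⇨ a)) ⇨ a = (b ⇨ a) ⊓ ((b ⇨ a) ⇨ a) := sup_himp_distrib _ _ _
    _ = (b ⇨ a) ⊓ a := inf_himp _ _
    _ ≤ b ⊔ (b ⇨ a) := inf_le_right.trans (le_himp.trans le_sup_right)

variable {m : H → H}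

theorem monotone_of_isLeast_himp_le_self (hmem : ∀ a : H, (m a ⇨ a) ≤ m a)
    (hleast : ∀ a b : H, (b ⇨ a) ≤ b → m a ≤ b) : Monotone m :=
  fun _ _ hab => hleast _ _ ((himp_le_himp_left hab).trans (hmem _))

theorem map_inf_of_isLeast_himp_le_self (hmem : ∀ a : H, (m a ⇨ a) ≤ m a)
    (hleast : ∀ a b : H, (b ⇨ a) ≤ b → m a ≤ b) (a b : H) :
    m (a ⊓ b) = m a ⊓ m b := by
  have hmono := monotone_of_isLeast_himp_le_self hmem hleast
  refine le_antisymm (le_inf (hmono inf_le_left) (hmono inf_le_right)) ?_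
  set c := m (a ⊓ b)
  calc m a ⊓ m b ≤ (c ⊔ (c ⇨ a)) ⊓ (c ⊔ (c ⇨ b)) :=
        inf_le_inf (hleast _ _ (sup_himp_himp_le a c)) (hleast _ _ (sup_himp_himp_le b c))
    _ = c ⊔ (c ⇨ a ⊓ b) := by rw [← sup_inf_left, himp_inf_distrib]
    _ ≤ c := sup_le le_rfl (hmem _)

end HeytingAlgebra

/-- If `m : H → H` sends each `a` to the least element of
`F_a = {b | (b ⇨ a) ≤ b}`, then `m` is a fronton operator on `H`. -/
theorem least_of_filter_is_fronton {H : Type*} [HeytingAlgebra H] (m : H → H)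
    (hmem : ∀ a : H, (m a ⇨ a) ≤ m a)
    (hleast : ∀ a b : H, (b ⇨ a) ≤ b → m a ≤ b) :
    m ⊤ = ⊤
    ∧ (∀ a b : H, m (a ⊓ b) = m a ⊓ m b)
    ∧ (∀ a : H, a ≤ m a)
    ∧ (∀ a b : H, m a ≤ b ⊔ (b ⇨ a))
    ∧ (∀ a : H, (m a ⇨ a) ≤ a) :=
  ⟨top_le_iff.mp (le_of_himp_le_self (hmem ⊤)),
    map_inf_of_isLeast_himp_le_self hmem hleast,
    fun a => le_of_himp_le_self (hmem a),
    fun a b => hleast _ _ (sup_himp_himp_le a b),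
    fun a => himp_le_of_himp_le_self (hmem a)⟩
end

section
/- If box₁ and box₂ are both fronton operators on the same Heyting algebra H, then box₁ a = box₂ a for every a ∈ H. That is, a Heyting algebra admits at most one fronton operator. -/
section Frontal

variable {H : Type*} [HeytingAlgebra H]

theorem frontal_le_of_himp_le {box : H → H} (hFront : ∀ a b : H, box a ≤ b ⊔ (b ⇨ a))
    {a b : H} (h : (b ⇨ a) ≤ b) : box a ≤ b :=
  (hFront a b).trans (sup_le le_rfl h)

theorem himp_le_of_lob {box : H → H} (hIncr : ∀ a : H, a ≤ box a)
    (hLob : ∀ a : H, (box a ⇨ a) ≤ a) (a : H) : (box a ⇨ a) ≤ box a :=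
  (hLob a).trans (hIncr a)

end Frontal

theorem fronton_unique_general {H : Type*} [HeytingAlgebra H] (box₁ box₂ : H → H)
    (h₁Incr : ∀ a : H, a ≤ box₁ a)
    (h₁Front : ∀ a b : H, box₁ a ≤ b ⊔ (b ⇨ a))
    (h₁Lob : ∀ a : H, (box₁ a ⇨ a) ≤ a)
    (h₂Incr : ∀ a : H, a ≤ box₂ a)
    (h₂Front : ∀ a b : H, box₂ a ≤ b ⊔ (b ⇨ a))
    (h₂Lob : ∀ a : H, (box₂ a ⇨ a) ≤ a)
    (a : H) :
    box₁ a = box₂ a :=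
  le_antisymm (frontal_le_of_himp_le h₁Front (himp_le_of_lob h₂Incr h₂Lob a))
    (frontal_le_of_himp_le h₂Front (himp_le_of_lob h₁Incr h₁Lob a))

/-- A Heyting algebra admits at most one fronton operator. -/
theorem fronton_unique {H : Type*} [HeytingAlgebra H] (box₁ box₂ : H → H)
    (h₁Top : box₁ ⊤ = ⊤)
    (h₁Meet : ∀ a b : H, box₁ (a ⊓ b) = box₁ a ⊓ box₁ b)
    (h₁Incr : ∀ a : H, a ≤ box₁ a)
    (h₁Front : ∀ a b : H, box₁ a ≤ b ⊔ (b ⇨ a))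
    (h₁Lob : ∀ a : H, (box₁ a ⇨ a) ≤ a)
    (h₂Top : box₂ ⊤ = ⊤)
    (h₂Meet : ∀ a b : H, box₂ (a ⊓ b) = box₂ a ⊓ box₂ b)
    (h₂Incr : ∀ a : H, a ≤ box₂ a)
    (h₂Front : ∀ a b : H, box₂ a ≤ b ⊔ (b ⇨ a))
    (h₂Lob : ∀ a : H, (box₂ a ⇨ a) ≤ a)
    (a : H) :
    box₁ a = box₂ a :=
  fronton_unique_general box₁ box₂ h₁Incr h₁Front h₁Lob h₂Incr h₂Front h₂Lob a
end

section
/- Every finite Heyting algebra H admits exactly one fronton operator; that is, there exists a unique map box : H → H satisfying, for all a, b ∈ H: box ⊤ = ⊤, box (a ⊓ b) = box a ⊓ box b, a ≤ box a, box a ≤ b ⊔ (b ⇨ a), and (box a ⇨ a) ≤ a. -/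
/-!
Fix `a`.  In the Heyting algebra `[a, ⊤]` the pseudocomplement of `b` is `b ⇨ a`, so its dense
elements are the `b` with `a ≤ b` and `b ⇨ a ≤ a`.  The axioms `a ≤ box a` and
`(box a ⇨ a) ≤ a` put `box a` among them, and since every such `b` equals `b ⊔ (b ⇨ a)`,
the frontal axiom `box a ≤ b ⊔ (b ⇨ a)` makes `box a` the least one.  Conversely the pointwise
least dense element is a fronton operator.  So a fronton operator is unique, and it exists
once each of these sets has a least element, which holds in a finite algebra because they
contain `⊤` and are closed under `⊓` (by currying, `b ⊓ c ⇨ a = b ⇨ c ⇨ a`).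
-/
lemma InfClosed.exists_isLeast {α : Type*} [SemilatticeInf α] {s : Set α} (hs : InfClosed s)
    (hfin : s.Finite) (hne : s.Nonempty) : ∃ c, IsLeast s c := by
  have hne' : hfin.toFinset.Nonempty := hfin.toFinset_nonempty.2 hne
  refine ⟨hfin.toFinset.inf' hne' id, ?_, fun b hb => Finset.inf'_le id (hfin.mem_toFinset.2 hb)⟩
  exact hs.finsetInf'_mem hne' fun b hb => hfin.mem_toFinset.1 hb

section

variable {H : Type*} [HeytingAlgebra H]

def denseAbove (a : H) : Set H := {b | a ≤ b ∧ b ⇨ a ≤ a}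

def IsFronton (box : H → H) : Prop :=
  box ⊤ = ⊤
    ∧ (∀ a b : H, box (a ⊓ b) = box a ⊓ box b)
    ∧ (∀ a : H, a ≤ box a)
    ∧ (∀ a b : H, box a ≤ b ⊔ (b ⇨ a))
    ∧ (∀ a : H, (box a ⇨ a) ≤ a)

lemma top_mem_denseAbove (a : H) : ⊤ ∈ denseAbove a := by
  simp [denseAbove]

lemma infClosed_denseAbove (a : H) : InfClosed (denseAbove a) := by
  rintro b ⟨hab, hb⟩ c ⟨hac, hc⟩
  refine ⟨le_inf hab hac, ?_⟩
  calc b ⊓ c ⇨ a = b ⇨ c ⇨ a := (himp_himp b c a).symm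
    _ ≤ b ⇨ a := himp_le_himp_left hc
    _ ≤ a := hb

lemma sup_himp_mem_denseAbove (a b : H) : b ⊔ (b ⇨ a) ∈ denseAbove a := by
  refine ⟨le_himp.trans le_sup_right, ?_⟩
  rw [sup_himp_distrib]
  exact inf_himp_le

lemma sup_himp_eq_self_of_mem_denseAbove {a b : H} (hb : b ∈ denseAbove a) :
    b ⊔ (b ⇨ a) = b :=
  sup_eq_left.2 (hb.2.trans hb.1)

lemma exists_isLeast_denseAbove [Finite H] (a : H) : ∃ c, IsLeast (denseAbove a) c :=
  (infClosed_denseAbove a).exists_isLeast (Set.toFinite _) ⟨⊤, top_mem_denseAbove a⟩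

section

variable {box : H → H} (hbox : ∀ a, IsLeast (denseAbove a) (box a))
include hbox

lemma le_sup_himp_of_isLeast (a b : H) : box a ≤ b ⊔ (b ⇨ a) :=
  (hbox a).2 (sup_himp_mem_denseAbove a b)

lemma monotone_of_isLeast : Monotone box := fun a b hab =>
  have hb : box b ⇨ a ≤ box b := (himp_le_himp_left hab).trans ((hbox b).1.2.trans (hbox b).1.1)
  (le_sup_himp_of_isLeast hbox a (box b)).trans (sup_le le_rfl hb)

lemma map_inf_of_isLeast (a b : H) : box (a ⊓ b) = box a ⊓ box b := by
  refine le_antisymm (le_inf (monotone_of_isLeast hbox inf_le_left)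
    (monotone_of_isLeast hbox inf_le_right)) ?_
  set c := box (a ⊓ b)
  calc box a ⊓ box b ≤ (c ⊔ (c ⇨ a)) ⊓ (c ⊔ (c ⇨ b)) :=
        inf_le_inf (le_sup_himp_of_isLeast hbox a c) (le_sup_himp_of_isLeast hbox b c)
    _ = c ⊔ (c ⇨ a ⊓ b) := by rw [himp_inf_distrib, sup_inf_left]
    _ = c := sup_himp_eq_self_of_mem_denseAbove (hbox (a ⊓ b)).1

lemma isFronton_of_isLeast : IsFronton box :=
  ⟨top_le_iff.1 (hbox ⊤).1.1, map_inf_of_isLeast hbox, fun a => (hbox a).1.1,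
    le_sup_himp_of_isLeast hbox, fun a => (hbox a).1.2⟩

end

lemma IsFronton.isLeast {box : H → H} (h : IsFronton box) (a : H) :
    IsLeast (denseAbove a) (box a) := by
  obtain ⟨-, -, hle, hfrontal, hfronton⟩ := h
  refine ⟨⟨hle a, hfronton a⟩, fun b hb => ?_⟩
  simpa only [sup_himp_eq_self_of_mem_denseAbove hb] using hfrontal a b

end

/-- Every finite Heyting algebra admits exactly one fronton operator. -/
theorem finite_heyting_unique_fronton {H : Type*} [HeytingAlgebra H] [Finite H] :
    ∃! box : H → H,
      box ⊤ = ⊤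
      ∧ (∀ a b : H, box (a ⊓ b) = box a ⊓ box b)
      ∧ (∀ a : H, a ≤ box a)
      ∧ (∀ a b : H, box a ≤ b ⊔ (b ⇨ a))
      ∧ (∀ a : H, (box a ⇨ a) ≤ a) := by
  show ∃! box : H → H, IsFronton box
  choose box hbox using exists_isLeast_denseAbove (H := H)
  exact ⟨box, isFronton_of_isLeast hbox,
    fun box' h' => funext fun a => (h'.isLeast a).unique (hbox a)⟩
end

section
/- Let H be a Heyting algebra equipped with a frontal operator box. For all a, b ∈ H with a ≤ b and b ≤ box a, setting c := (b ⇨ a) ⊓ box a one has b ⊓ c = a and b ⊔ c = box a. Consequently, in the interval [a, box a] every element b has a complement relative to the bounds a and box a, given by (b ⇨ a) ⊓ box a. -/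
theorem inf_himp_inf_eq_of_le {H : Type*} [HeytingAlgebra H] {a b c : H} (hab : a ≤ b)
    (hac : a ≤ c) : b ⊓ ((b ⇨ a) ⊓ c) = a := by
  rw [← inf_assoc, inf_himp, inf_eq_right.mpr hab, inf_eq_left.mpr hac]

theorem sup_himp_inf_eq_of_le {H : Type*} [HeytingAlgebra H] {a b c : H} (hbc : b ≤ c)
    (hc : c ≤ b ⊔ (b ⇨ a)) : b ⊔ ((b ⇨ a) ⊓ c) = c := by
  rw [sup_inf_left, sup_eq_right.mpr hbc]
  exact inf_eq_right.mpr hc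

theorem interval_complement_general {H : Type*} [HeytingAlgebra H] (box : H → H)
    (hIncr : ∀ a : H, a ≤ box a)
    (hFront : ∀ a b : H, box a ≤ b ⊔ (b ⇨ a))
    (a b : H) (hab : a ≤ b) (hb : b ≤ box a) :
    b ⊓ ((b ⇨ a) ⊓ box a) = a ∧ b ⊔ ((b ⇨ a) ⊓ box a) = box a :=
  ⟨inf_himp_inf_eq_of_le hab (hIncr a), sup_himp_inf_eq_of_le hb (hFront a b)⟩

/-- In a Heyting algebra with a frontal operator `box`, every `b` in the
interval `[a, box a]` has `(b ⇨ a) ⊓ box a` as a complement relative to the bounds. -/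
theorem interval_complement {H : Type*} [HeytingAlgebra H] (box : H → H)
    (hTop : box ⊤ = ⊤)
    (hMeet : ∀ a b : H, box (a ⊓ b) = box a ⊓ box b)
    (hIncr : ∀ a : H, a ≤ box a)
    (hFront : ∀ a b : H, box a ≤ b ⊔ (b ⇨ a))
    (a b : H) (hab : a ≤ b) (hb : b ≤ box a) :
    b ⊓ ((b ⇨ a) ⊓ box a) = a ∧ b ⊔ ((b ⇨ a) ⊓ box a) = box a :=
  interval_complement_general box hIncr hFront a b hab hb
end

section
/- Let M be a K4-algebra. Then: (i) ⊥, ⊤ ∈ O⁺(M), and O⁺(M) is closed under ⊓, under ⊔, under the map a ↦ □a, and under the map (a, b) ↦ □⁺(aᶜ ⊔ b); (ii) for all a, b, c ∈ O⁺(M): c ≤ □⁺(aᶜ ⊔ b) if and only if a ⊓ c ≤ b, so □⁺(aᶜ ⊔ b) is a Heyting implication on the bounded distributive lattice O⁺(M); (iii) for all a, b ∈ O⁺(M): a ≤ □a and □a ≤ b ⊔ □⁺(bᶜ ⊔ a). Hence O⁺(M), with implication (a, b) ↦ □⁺(aᶜ ⊔ b) and modal operator a ↦ □a, is a frontal Heyting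 algebra. -/
/-!
The argument rests on two facts about `□`: it is monotone (from `□(a ⊓ b) = □a ⊓ □b`) and, by axiom 4,
`□⁺x = x ⊓ □x` is always quasi-open. A quasi-open `c` below `x` is then below `□x`, so
`c ≤ □⁺x ↔ c ≤ x`, and the Heyting adjunction on `O⁺(M)` is the Boolean one,
`c ≤ aᶜ ⊔ b ↔ a ⊓ c ≤ b`. Frontality splits `□a` along `b ⊔ bᶜ`, using `bᶜ ⊓ □a ≤ □⁺(bᶜ ⊔ a)`.
-/

section K4

variable {M : Type*} [BooleanAlgebra M] {box : M → M}

def boxPlus (box : M → M) (x : M) : M := x ⊓ box x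

theorem monotone_of_map_inf (hMeet : ∀ a b : M, box (a ⊓ b) = box a ⊓ box b) :
    Monotone box := fun a b hab =>
  calc box a = box (a ⊓ b) := by rw [inf_eq_left.mpr hab]
    _ = box a ⊓ box b := hMeet a b
    _ ≤ box b := inf_le_right

theorem inf_le_box_inf (hMeet : ∀ a b : M, box (a ⊓ b) = box a ⊓ box b) {a b : M}
    (ha : a ≤ box a) (hb : b ≤ box b) : a ⊓ b ≤ box (a ⊓ b) :=
  (hMeet a b).symm ▸ inf_le_inf ha hb

theorem sup_le_box_sup (hmono : Monotone box) {a b : M} (ha : a ≤ box a) (hb : b ≤ box b) :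
    a ⊔ b ≤ box (a ⊔ b) :=
  sup_le (ha.trans (hmono le_sup_left)) (hb.trans (hmono le_sup_right))

theorem boxPlus_le_box_boxPlus (hMeet : ∀ a b : M, box (a ⊓ b) = box a ⊓ box b)
    (h4 : ∀ a : M, box a ≤ box (box a)) (x : M) : boxPlus box x ≤ box (boxPlus box x) := by
  rw [boxPlus, hMeet]
  exact le_inf inf_le_right (inf_le_right.trans (h4 x))

theorem le_boxPlus_iff (hmono : Monotone box) {c x : M} (hc : c ≤ box c) :
    c ≤ boxPlus box x ↔ c ≤ x :=
  ⟨fun h => h.trans inf_le_left, fun h => le_inf h (hc.trans (hmono h))⟩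

theorem le_boxPlus_compl_sup_iff (hmono : Monotone box) {a b c : M} (hc : c ≤ box c) :
    c ≤ boxPlus box (aᶜ ⊔ b) ↔ a ⊓ c ≤ b := by
  rw [le_boxPlus_iff hmono hc, sup_comm, ← himp_eq, le_himp_iff, inf_comm]

theorem box_le_sup_boxPlus (hmono : Monotone box) (a b : M) :
    box a ≤ b ⊔ boxPlus box (bᶜ ⊔ a) :=
  have hcompl : bᶜ ⊓ box a ≤ boxPlus box (bᶜ ⊔ a) :=
    le_inf (inf_le_left.trans le_sup_left) (inf_le_right.trans (hmono le_sup_right))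
  calc box a = (b ⊔ bᶜ) ⊓ box a := by rw [sup_compl_eq_top, top_inf_eq]
    _ = b ⊓ box a ⊔ bᶜ ⊓ box a := inf_sup_right b bᶜ (box a)
    _ ≤ b ⊔ boxPlus box (bᶜ ⊔ a) := sup_le_sup inf_le_left hcompl

end K4

/-- For a K4-algebra `M`, the set of quasi-open elements
`O⁺(M) = {a | a ≤ □a}` contains `⊥, ⊤`, is closed under `⊓`, `⊔`, `□`, and
`(a,b) ↦ □⁺(aᶜ ⊔ b)` (where `□⁺x = x ⊓ □x`); the operation `□⁺(aᶜ ⊔ b)` is a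
Heyting implication on `O⁺(M)`; and `□` is a frontal operator on the resulting
Heyting algebra. -/
theorem quasiOpen_frontal_heyting {M : Type*} [BooleanAlgebra M] (box : M → M)
    (hTop : box ⊤ = ⊤)
    (hMeet : ∀ a b : M, box (a ⊓ b) = box a ⊓ box b)
    (h4 : ∀ a : M, box a ≤ box (box a)) :
    -- (i) closure properties of O⁺(M) = {a | a ≤ box a}
    ((⊥ : M) ≤ box ⊥)
    ∧ ((⊤ : M) ≤ box ⊤)
    ∧ (∀ a b : M, a ≤ box a → b ≤ box b → a ⊓ b ≤ box (a ⊓ b))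
    ∧ (∀ a b : M, a ≤ box a → b ≤ box b → a ⊔ b ≤ box (a ⊔ b))
    ∧ (∀ a : M, a ≤ box a → box a ≤ box (box a))
    ∧ (∀ a b : M, a ≤ box a → b ≤ box b →
        (aᶜ ⊔ b) ⊓ box (aᶜ ⊔ b) ≤ box ((aᶜ ⊔ b) ⊓ box (aᶜ ⊔ b)))
    -- (ii) the Heyting adjunction on O⁺(M)
    ∧ (∀ a b c : M, a ≤ box a → b ≤ box b → c ≤ box c →
        (c ≤ (aᶜ ⊔ b) ⊓ box (aᶜ ⊔ b) ↔ a ⊓ c ≤ b))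
    -- (iii) box is a frontal operator on O⁺(M)
    ∧ (∀ a : M, a ≤ box a → a ≤ box a)
    ∧ (∀ a b : M, a ≤ box a → b ≤ box b →
        box a ≤ b ⊔ ((bᶜ ⊔ a) ⊓ box (bᶜ ⊔ a))) := by
  have hmono := monotone_of_map_inf hMeet
  exact ⟨bot_le, hTop.ge,
    fun _ _ => inf_le_box_inf hMeet,
    fun _ _ => sup_le_box_sup hmono,
    fun a _ => h4 a,
    fun a b _ _ => boxPlus_le_box_boxPlus hMeet h4 (aᶜ ⊔ b),
    fun _ _ _ _ _ hc => le_boxPlus_compl_sup_iff hmono hc,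
    fun _ h => h,
    fun a b _ _ => box_le_sup_boxPlus hmono a b⟩
end

section
/- Let M be a Magari algebra. Then for every a ∈ O⁺(M): □⁺((□a)ᶜ ⊔ a) ≤ a. Hence O⁺(M), with Heyting implication (a, b) ↦ □⁺(aᶜ ⊔ b) and modal operator a ↦ □a, satisfies the fronton law (box a ⇨ a) ≤ a, i.e., it is a fronton (a KM-algebra). -/
theorem magari_quasiOpen_fronton_general {M : Type*} [BooleanAlgebra M] (box : M → M)
    (hMagari : ∀ a : M, box ((box a)ᶜ ⊔ a) ≤ box a)
    (a : M) :
    ((box a)ᶜ ⊔ a) ⊓ box ((box a)ᶜ ⊔ a) ≤ a :=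
  calc ((box a)ᶜ ⊔ a) ⊓ box ((box a)ᶜ ⊔ a)
      ≤ ((box a)ᶜ ⊔ a) ⊓ box a := inf_le_inf_left _ (hMagari a)
    _ ≤ a := by
      rw [sup_comm, ← himp_eq]
      exact himp_inf_le

/-- In a Magari algebra `M`, for every quasi-open element `a`
(`a ≤ □a`), the fronton law `□⁺((□a)ᶜ ⊔ a) ≤ a` holds, where `□⁺x = x ⊓ □x`.
Hence `O⁺(M)` is a fronton (a KM-algebra). -/
theorem magari_quasiOpen_fronton {M : Type*} [BooleanAlgebra M] (box : M → M)
    (hTop : box ⊤ = ⊤)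
    (hMeet : ∀ a b : M, box (a ⊓ b) = box a ⊓ box b)
    (h4 : ∀ a : M, box a ≤ box (box a))
    (hMagari : ∀ a : M, box ((box a)ᶜ ⊔ a) ≤ box a)
    (a : M) (ha : a ≤ box a) :
    ((box a)ᶜ ⊔ a) ⊓ box ((box a)ᶜ ⊔ a) ≤ a :=
  magari_quasiOpen_fronton_general box hMagari a
end

section
/- Let (X, ≤, ⊏) be a modalized Esakia space. Then the following are equivalent: (1) X validates the KM axiom, i.e., for every clopen ≤-upset U and every x ∈ X, if for all y with x ≤ y one has (y ∈ ⊠U → y ∈ U), then x ∈ U; (2) for every clopen ≤-downset D and every x ∈ max_⊏ D, it is not the case that x ⊏ x. -/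
/-!
If `x ∉ U` for an open `U`, compactness and Zorn's lemma give a `≤`-maximal point `m ≥ x` of the
closed set `Uᶜ`. Since `≤` is the reflexive closure of `⊏`, such an `m` lies in `max_⊏ Uᶜ`, and a
point of `max_⊏ D` belongs to `⊠ Dᶜ` exactly when it is `⊏`-irreflexive. So irreflexivity of `m`
puts `m` in `⊠ U \ U`, refuting the KM premise at `x`. Conversely, a reflexive `x ∈ max_⊏ D`
satisfies the KM premise for `U = Dᶜ` while `x ∉ Dᶜ`.
-/

/-- The modal box of a set: `⊠U = {x | ∀ y, x ⊏ y → y ∈ U}`. -/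
def boxSet {X : Type*} (sq : X → X → Prop) (U : Set X) : Set X :=
  {x | ∀ y, sq x y → y ∈ U}

/-- `max_⊏ U = {x ∈ U | ∀ y, x ⊏ y → y ∈ U → y = x}`. -/
def maxSet {X : Type*} (sq : X → X → Prop) (U : Set X) : Set X :=
  {x | x ∈ U ∧ ∀ y, sq x y → y ∈ U → y = x}

theorem IsClosed.exists_le_maximal {X : Type*} [TopologicalSpace X] [CompactSpace X]
    [PartialOrder X] [ClosedIciTopology X] {F : Set X} (hF : IsClosed F) {x : X} (hx : x ∈ F) :
    ∃ m, x ≤ m ∧ Maximal (· ∈ F) m := by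
  refine zorn_le_nonempty₀ F (fun c hcF hchain z₀ hz₀ => ?_) x hx
  have : Nonempty c := ⟨⟨z₀, hz₀⟩⟩
  obtain ⟨ub, hub⟩ : (⋂ z : c, F ∩ Set.Ici (z : X)).Nonempty := by
    refine IsCompact.nonempty_iInter_of_directed_nonempty_isCompact_isClosed _ ?_
      (fun z => ⟨z, hcF z.2, le_rfl⟩) (fun z => (hF.inter isClosed_Ici).isCompact)
      (fun z => hF.inter isClosed_Ici)
    exact IsChain.directed (f := fun z => F ∩ Set.Ici z) (r := fun s t : Set X => s ⊇ t)
      (hchain.mono_rel fun a b hab => Set.inter_subset_inter_right F (Set.Ici_subset_Ici.2 hab))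
  rw [Set.mem_iInter] at hub
  exact ⟨ub, (hub ⟨z₀, hz₀⟩).1, fun z hz => (hub ⟨z, hz⟩).2⟩

section Modal

variable {X : Type*} {sq : X → X → Prop} {D U : Set X} {x : X}

theorem mem_boxSet_compl_iff_of_mem_maxSet (hx : x ∈ maxSet sq D) :
    x ∈ boxSet sq Dᶜ ↔ ¬ sq x x := by
  refine ⟨fun hbox hxx => hbox x hxx hx.1, fun hirr y hxy hyD => ?_⟩
  obtain rfl := hx.2 y hxy hyD
  exact hirr hxy

variable [PartialOrder X]

theorem mem_maxSet_iff_maximal (hrefl : ∀ x y : X, x ≤ y ↔ x = y ∨ sq x y)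
    : x ∈ maxSet sq D ↔ Maximal (· ∈ D) x := by
  rw [maximal_iff]
  refine and_congr_right fun _ => ⟨fun hmax y hyD hxy => ?_, fun hmax y hxy hyD => ?_⟩
  · rcases (hrefl x y).1 hxy with rfl | hsq
    · rfl
    · exact (hmax y hsq hyD).symm
  · exact (hmax hyD ((hrefl x y).2 (Or.inr hxy))).symm

theorem forall_le_mem_boxSet_compl_imp_of_mem_maxSet (hrefl : ∀ x y : X, x ≤ y ↔ x = y ∨ sq x y)
    (hx : x ∈ maxSet sq D) (hxx : sq x x) :
    ∀ y, x ≤ y → y ∈ boxSet sq Dᶜ → y ∈ Dᶜ := by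
  intro y hxy hybox hyD
  have hyx : y = x := by
    rcases (hrefl x y).1 hxy with rfl | hsq
    · rfl
    · exact hx.2 y hsq hyD
  subst hyx
  exact (mem_boxSet_compl_iff_of_mem_maxSet hx).1 hybox hxx

theorem mem_of_forall_le_mem_boxSet_imp_mem (hrefl : ∀ x y : X, x ≤ y ↔ x = y ∨ sq x y)
    [TopologicalSpace X] [CompactSpace X]
    [ClosedIciTopology X] (hU : IsOpen U) (hirr : ∀ m ∈ maxSet sq Uᶜ, ¬ sq m m)
    (hx : ∀ y, x ≤ y → y ∈ boxSet sq U → y ∈ U) : x ∈ U := by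
  by_contra hxU
  obtain ⟨m, hxm, hm⟩ := hU.isClosed_compl.exists_le_maximal hxU
  have hmax : m ∈ maxSet sq Uᶜ := (mem_maxSet_iff_maximal hrefl).2 hm
  have hbox : m ∈ boxSet sq U := by
    simpa only [compl_compl] using (mem_boxSet_compl_iff_of_mem_maxSet hmax).2 (hirr m hmax)
  exact hmax.1 (hx m hxm hbox)

end Modal

theorem km_axiom_iff_max_irreflexive_general {X : Type*} [TopologicalSpace X]
    [CompactSpace X] [PartialOrder X] (sq : X → X → Prop)
    (hupClosed : ∀ x : X, IsClosed {y | x ≤ y})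
    (hreflClosure : ∀ x y : X, x ≤ y ↔ x = y ∨ sq x y) :
    ((∀ U : Set X, IsClopen U → (∀ x y, x ∈ U → x ≤ y → y ∈ U) →
        ∀ x : X, (∀ y, x ≤ y → (y ∈ boxSet sq U → y ∈ U)) → x ∈ U)
      ↔
     (∀ D : Set X, IsClopen D → (∀ x y, x ∈ D → y ≤ x → y ∈ D) →
        ∀ x ∈ maxSet sq D, ¬ sq x x)) := by
  have : ClosedIciTopology X := ⟨hupClosed⟩
  constructor
  · intro hKM D hD hDdown x hx hxx
    have hDcup : ∀ a b, a ∈ Dᶜ → a ≤ b → b ∈ Dᶜ := fun a b ha hab hb => ha (hDdown b a hb hab)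
    exact hKM Dᶜ hD.compl hDcup x
      (forall_le_mem_boxSet_compl_imp_of_mem_maxSet hreflClosure hx hxx) hx.1
  · intro hirr U hU hUup x hx
    have hUcdown : ∀ a b, a ∈ Uᶜ → b ≤ a → b ∈ Uᶜ := fun a b ha hba hb => ha (hUup b a hb hba)
    exact mem_of_forall_le_mem_boxSet_imp_mem hreflClosure hU.isOpen
      (hirr Uᶜ hU.compl hUcdown) hx

/-- A modalized Esakia space validates the KM axiom iff no
`⊏`-maximal point of any clopen `≤`-downset is `⊏`-reflexive. -/
theorem km_axiom_iff_max_irreflexive {X : Type*} [TopologicalSpace X]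
    [CompactSpace X] [T2Space X] [PartialOrder X] (sq : X → X → Prop)
    (hbasis : ∀ (x : X) (U : Set X), IsOpen U → x ∈ U →
      ∃ V : Set X, IsClopen V ∧ x ∈ V ∧ V ⊆ U)
    (hupClosed : ∀ x : X, IsClosed {y | x ≤ y})
    (hdownClopen : ∀ U : Set X, IsClopen U → IsClopen {x | ∃ y ∈ U, x ≤ y})
    (hboxClopen : ∀ U : Set X, IsClopen U → (∀ x y, x ∈ U → x ≤ y → y ∈ U) →
      IsClopen (boxSet sq U))
    (hboxUpset : ∀ U : Set X, IsClopen U → (∀ x y, x ∈ U → x ≤ y → y ∈ U) →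
      (∀ x y, x ∈ boxSet sq U → x ≤ y → y ∈ boxSet sq U))
    (hreflClosure : ∀ x y : X, x ≤ y ↔ x = y ∨ sq x y) :
    ((∀ U : Set X, IsClopen U → (∀ x y, x ∈ U → x ≤ y → y ∈ U) →
        ∀ x : X, (∀ y, x ≤ y → (y ∈ boxSet sq U → y ∈ U)) → x ∈ U)
      ↔
     (∀ D : Set X, IsClopen D → (∀ x y, x ∈ D → y ≤ x → y ∈ D) →
        ∀ x ∈ maxSet sq D, ¬ sq x x)) :=
  km_axiom_iff_max_irreflexive_general sq hupClosed hreflClosure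
end

section
/- Let X be a topological space with a binary relation ⊏, and let ≤ be the reflexive closure of ⊏. Assume ≤ is transitive and antisymmetric (hence a partial order), and that ↓U := {x : ∃y ∈ U, x ≤ y} is clopen for every clopen U ⊆ X. If for every clopen ≤-downset D every point of max_⊏ D is ⊏-irreflexive, then for every clopen U ⊆ X every point of max_⊏ U is ⊏-irreflexive. (Dually: the ⊏-reduct of a KM-space satisfies the GL maximality condition for all clopen sets.) -/
/-!
A `⊏`-maximal point `x` of a clopen `U` stays `⊏`-maximal in the clopen downset `↓U`:
if `x ⊏ y ≤ u` with `u ∈ U`, then `x ≤ u` forces `u = x`, so `y ≤ x ⊏ y` and `y = x` by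
antisymmetry. The hypothesis on clopen downsets then applies to `↓U`.
-/

/-- The reflexive closure of a relation. -/
def rcl {X : Type*} (sq : X → X → Prop) (x y : X) : Prop := x = y ∨ sq x y

section DownClosure

variable {X : Type*} (sq : X → X → Prop)

def rclDown (U : Set X) : Set X := {x | ∃ y ∈ U, rcl sq x y}

variable {sq}

lemma subset_rclDown (U : Set X) : U ⊆ rclDown sq U :=
  fun x hx => ⟨x, hx, Or.inl rfl⟩

lemma rclDown_mem_of_rcl (htrans : ∀ x y z : X, rcl sq x y → rcl sq y z → rcl sq x z)
    (U : Set X) {a b : X} (ha : a ∈ rclDown sq U) (hba : rcl sq b a) : b ∈ rclDown sq U := by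
  obtain ⟨u, huU, hau⟩ := ha
  exact ⟨u, huU, htrans b a u hba hau⟩

lemma eq_of_sq_of_mem_rclDown (htrans : ∀ x y z : X, rcl sq x y → rcl sq y z → rcl sq x z)
    (hantisymm : ∀ x y : X, rcl sq x y → rcl sq y x → x = y)
    {U : Set X} {x : X} (hxmax : ∀ y, sq x y → y ∈ U → y = x)
    {y : X} (hxy : sq x y) (hy : y ∈ rclDown sq U) : y = x := by
  obtain ⟨u, huU, hyu⟩ := hy
  have hux : u = x := by
    rcases htrans x y u (Or.inr hxy) hyu with hxu | hxu
    · exact hxu.symm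
    · exact hxmax u hxu huU
  subst hux
  exact hantisymm y u hyu (Or.inr hxy)

end DownClosure

/-- If every `⊏`-maximal point of every clopen `≤`-downset is
`⊏`-irreflexive, then every `⊏`-maximal point of every clopen set is
`⊏`-irreflexive (where `≤` is the reflexive closure of `⊏`, assumed to be a
partial order, and downsets of clopens are clopen). -/
theorem max_irreflexive_clopen_of_downsets {X : Type*} [TopologicalSpace X]
    (sq : X → X → Prop)
    (htrans : ∀ x y z : X, rcl sq x y → rcl sq y z → rcl sq x z)
    (hantisymm : ∀ x y : X, rcl sq x y → rcl sq y x → x = y)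
    (hdownClopen : ∀ U : Set X, IsClopen U → IsClopen {x | ∃ y ∈ U, rcl sq x y})
    (hmaxDown : ∀ D : Set X, IsClopen D → (∀ x y, x ∈ D → rcl sq y x → y ∈ D) →
      ∀ x, x ∈ D → (∀ y, sq x y → y ∈ D → y = x) → ¬ sq x x)
    (U : Set X) (hU : IsClopen U) (x : X)
    (hxU : x ∈ U) (hxmax : ∀ y, sq x y → y ∈ U → y = x) :
    ¬ sq x x :=
  hmaxDown (rclDown sq U) (hdownClopen U hU)
    (fun _ _ ha hba => rclDown_mem_of_rcl htrans U ha hba) x (subset_rclDown U hxU)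
    (fun _ hxy hy => eq_of_sq_of_mem_rclDown htrans hantisymm hxmax hxy hy)
end

section
/- Let X and Y be GL-spaces and f : X → Y a pre-stable map. Let D be a finite family of clopen subsets of Y and E := {↓_{R⁺} d : d ∈ D}, where ↓_{R⁺} d := {x : ∃y ∈ d, x = y ∨ R x y}. If f satisfies the BFC^R for E, then f satisfies the BFC^R for D. -/
/-!
Löb's axiom on `X` yields, among the `R`-successors of `x` lying in the clopen
`f⁻¹(↓_{R⁺} d)`, one, `m`, with no `R`-successor in that set. The BFC^R for `↓_{R⁺} d`
at `m` then rules out `f m ∈ ↓_{R⁺} d \ d`, so `f m ∈ d`. Conversely, a witness in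
`↓_{R⁺} d` yields one in `d` by transitivity of `R` on `Y`.
-/

/-- The `R⁺`-downset of a set: `↓_{R⁺} d = {x | ∃ y ∈ d, x = y ∨ R x y}`. -/
def downRp {X : Type*} (R : X → X → Prop) (d : Set X) : Set X :=
  {x | ∃ y ∈ d, x = y ∨ R x y}

section downRp

variable {X : Type*} {R : X → X → Prop} {d : Set X}

theorem subset_downRp : d ⊆ downRp R d :=
  fun x hx => ⟨x, hx, Or.inl rfl⟩

theorem downRp_eq_union : downRp R d = d ∪ {x | ∃ y ∈ d, R x y} := by
  ext x
  constructor
  · rintro ⟨y, hy, rfl | hxy⟩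
    · exact Or.inl hy
    · exact Or.inr ⟨y, hy, hxy⟩
  · rintro (hx | ⟨y, hy, hxy⟩)
    · exact subset_downRp hx
    · exact ⟨y, hy, Or.inr hxy⟩

theorem isClopen_downRp [TopologicalSpace X]
    (hdown : ∀ U : Set X, IsClopen U → IsClopen {x | ∃ y ∈ U, R x y}) (hd : IsClopen d) :
    IsClopen (downRp R d) :=
  downRp_eq_union (R := R) ▸ hd.union (hdown d hd)

theorem exists_rel_mem_of_rel_mem_downRp (htrans : Transitive R) {x y : X} (hxy : R x y)
    (hy : y ∈ downRp R d) : ∃ w ∈ d, R x w := by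
  obtain ⟨w, hw, rfl | hyw⟩ := hy
  · exact ⟨y, hw, hxy⟩
  · exact ⟨w, hw, htrans hxy hyw⟩

end downRp

theorem exists_rel_mem_max_of_lob {X : Type*} [TopologicalSpace X] {R : X → X → Prop}
    (hlob : ∀ U : Set X, IsClopen U → ∀ x : X,
      (∀ y, R x y → ((∀ z, R y z → z ∈ U) → y ∈ U)) → (∀ y, R x y → y ∈ U))
    {V : Set X} (hV : IsClopen V) {x z : X} (hxz : R x z) (hz : z ∈ V) :
    ∃ m, R x m ∧ m ∈ V ∧ ∀ w, R m w → w ∉ V := by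
  by_contra! h
  refine hlob Vᶜ hV.compl x (fun y hxy hy hyV => ?_) z hxz hz
  obtain ⟨w, hyw, hw⟩ := h y hxy hyV
  exact hy w hyw hw

theorem bfc_of_bfc_downsets_general {X Y : Type*}
    [TopologicalSpace X]
    [TopologicalSpace Y]
    (RX : X → X → Prop) (RY : Y → Y → Prop)
    (hlobX : ∀ U : Set X, IsClopen U → ∀ x : X,
      (∀ y, RX x y → ((∀ z, RX y z → z ∈ U) → y ∈ U)) → (∀ y, RX x y → y ∈ U))
    (hdownY : ∀ U : Set Y, IsClopen U → IsClopen {x | ∃ y ∈ U, RY x y})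
    (htransY : Transitive RY)
    (f : X → Y) (hf : Continuous f)
    (D : Set (Set Y)) (hDclopen : ∀ d ∈ D, IsClopen d)
    (hBFCE : ∀ (x : X), ∀ d ∈ D,
      ((∃ y ∈ downRp RY d, RY (f x) y) ↔ (∃ z : X, RX x z ∧ f z ∈ downRp RY d))) :
    ∀ (x : X), ∀ d ∈ D,
      ((∃ y ∈ d, RY (f x) y) ↔ (∃ z : X, RX x z ∧ f z ∈ d)) := by
  intro x d hd
  constructor
  · rintro ⟨y, hy, hxy⟩
    obtain ⟨z, hxz, hz⟩ := (hBFCE x d hd).mp ⟨y, subset_downRp hy, hxy⟩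
    have hV : IsClopen (f ⁻¹' downRp RY d) :=
      (isClopen_downRp hdownY (hDclopen d hd)).preimage hf
    obtain ⟨m, hxm, ⟨w, hw, rfl | hmw⟩, hmax⟩ := exists_rel_mem_max_of_lob hlobX hV hxz hz
    · exact ⟨m, hxm, hw⟩
    · obtain ⟨m', hmm', hm'⟩ := (hBFCE m d hd).mp ⟨w, subset_downRp hw, hmw⟩
      exact absurd hm' (hmax m' hmm')
  · rintro ⟨z, hxz, hz⟩
    obtain ⟨y, hy, hxy⟩ := (hBFCE x d hd).mpr ⟨z, hxz, subset_downRp hz⟩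
    exact exists_rel_mem_of_rel_mem_downRp htransY hxy hy

/-- For a pre-stable map `f` between GL-spaces and a finite
family `D` of clopens of `Y`, if `f` satisfies the BFC^R for
`E = {↓_{R⁺} d : d ∈ D}`, then `f` satisfies the BFC^R for `D`. -/
theorem bfc_of_bfc_downsets {X Y : Type*}
    [TopologicalSpace X] [CompactSpace X] [T2Space X]
    [TopologicalSpace Y] [CompactSpace Y] [T2Space Y]
    (RX : X → X → Prop) (RY : Y → Y → Prop)
    (hbasisX : ∀ (x : X) (U : Set X), IsOpen U → x ∈ U →
      ∃ V : Set X, IsClopen V ∧ x ∈ V ∧ V ⊆ U)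
    (hpointX : ∀ x : X, IsClosed {y | RX x y})
    (hdownX : ∀ U : Set X, IsClopen U → IsClopen {x | ∃ y ∈ U, RX x y})
    (htransX : Transitive RX)
    (hlobX : ∀ U : Set X, IsClopen U → ∀ x : X,
      (∀ y, RX x y → ((∀ z, RX y z → z ∈ U) → y ∈ U)) → (∀ y, RX x y → y ∈ U))
    (hbasisY : ∀ (y : Y) (U : Set Y), IsOpen U → y ∈ U →
      ∃ V : Set Y, IsClopen V ∧ y ∈ V ∧ V ⊆ U)
    (hpointY : ∀ x : Y, IsClosed {y | RY x y})
    (hdownY : ∀ U : Set Y, IsClopen U → IsClopen {x | ∃ y ∈ U, RY x y})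
    (htransY : Transitive RY)
    (hlobY : ∀ U : Set Y, IsClopen U → ∀ x : Y,
      (∀ y, RY x y → ((∀ z, RY y z → z ∈ U) → y ∈ U)) → (∀ y, RY x y → y ∈ U))
    (f : X → Y) (hf : Continuous f)
    (hpre : ∀ x y : X, (x = y ∨ RX x y) → (f x = f y ∨ RY (f x) (f y)))
    (D : Set (Set Y)) (hDfin : D.Finite) (hDclopen : ∀ d ∈ D, IsClopen d)
    (hBFCE : ∀ (x : X), ∀ d ∈ D,
      ((∃ y ∈ downRp RY d, RY (f x) y) ↔ (∃ z : X, RX x z ∧ f z ∈ downRp RY d))) :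
    ∀ (x : X), ∀ d ∈ D,
      ((∃ y ∈ d, RY (f x) y) ↔ (∃ z : X, RX x z ∧ f z ∈ d)) :=
  bfc_of_bfc_downsets_general RX RY hlobX hdownY htransY f hf D hDclopen hBFCE
end

section
/- Let X and Y be KM-spaces and f : X → Y a continuous ≤-preserving map. Let D be a finite family of clopen subsets of Y and E := {↓_≤ d : d ∈ D}, where ↓_≤ d := {x : ∃y ∈ d, x ≤ y}. If f satisfies the BFC^⊏ for E, then f satisfies the BFC^⊏ for D. -/
/-- The `≤`-downset of a set. -/
def downLe {X : Type*} [LE X] (d : Set X) : Set X := {x | ∃ y ∈ d, x ≤ y}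

def SatisfiesBFC {X Y : Type*} (sqX : X → X → Prop) (sqY : Y → Y → Prop) (f : X → Y)
    (d : Set Y) : Prop :=
  ∀ x, (∃ y ∈ d, sqY (f x) y) ↔ ∃ z, sqX x z ∧ f z ∈ d

def ValidatesKM {X : Type*} [TopologicalSpace X] [LE X] (sq : X → X → Prop) : Prop :=
  ∀ U : Set X, IsClopen U → (∀ x y, x ∈ U → x ≤ y → y ∈ U) →
    ∀ x : X, (∀ y, x ≤ y → (y ∈ boxSet sq U → y ∈ U)) → x ∈ U

lemma isLowerSet_downLe {X : Type*} [Preorder X] (d : Set X) : IsLowerSet (downLe d) :=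
  fun _ _ hba ⟨c, hc, hac⟩ => ⟨c, hc, hba.trans hac⟩

lemma sq_of_sq_of_le {X : Type*} [PartialOrder X] {sq : X → X → Prop}
    (hrefl : ∀ x y : X, x ≤ y ↔ x = y ∨ sq x y) {a b c : X}
    (hab : sq a b) (hbc : b ≤ c) : sq a c := by
  have hab' : a ≤ b := (hrefl a b).2 (Or.inr hab)
  rcases (hrefl a c).1 (hab'.trans hbc) with rfl | hac
  · rwa [le_antisymm hbc hab'] at hab
  · exact hac

lemma exists_le_forall_sq_notMem_of_validatesKM {X : Type*} [TopologicalSpace X] [LE X]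
    {sq : X → X → Prop} (hkm : ValidatesKM sq)
    {C : Set X} (hC : IsClopen C) (hCdown : IsLowerSet C) {z₀ : X} (hz₀ : z₀ ∈ C) :
    ∃ z, z₀ ≤ z ∧ z ∈ C ∧ ∀ w, sq z w → w ∉ C := by
  by_contra! hsucc
  have hz₀' : z₀ ∈ Cᶜ := by
    refine hkm Cᶜ hC.compl (fun a b ha hab => hCdown.compl hab ha) z₀ ?_
    intro w hz₀w hbox hwC
    obtain ⟨v, hwv, hvC⟩ := hsucc w hz₀w hwC
    exact hbox v hwv hvC
  exact hz₀' hz₀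

theorem SatisfiesBFC.of_downLe {X Y : Type*} [TopologicalSpace X] [PartialOrder X]
    [TopologicalSpace Y] [PartialOrder Y] {sqX : X → X → Prop} {sqY : Y → Y → Prop}
    (hreflX : ∀ x y : X, x ≤ y ↔ x = y ∨ sqX x y) (hkmX : ValidatesKM sqX)
    (hreflY : ∀ x y : Y, x ≤ y ↔ x = y ∨ sqY x y)
    {f : X → Y} (hf : Continuous f) (hmono : Monotone f) {d : Set Y}
    (hd : IsClopen (downLe d)) (hBFC : SatisfiesBFC sqX sqY f (downLe d)) :
    SatisfiesBFC sqX sqY f d := by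
  intro x
  constructor
  · rintro ⟨y, hy, hxy⟩
    obtain ⟨z₀, hxz₀, hz₀⟩ := (hBFC x).1 ⟨y, ⟨y, hy, le_rfl⟩, hxy⟩
    obtain ⟨z, hz₀z, ⟨c, hc, hzc⟩, hzmax⟩ :=
      exists_le_forall_sq_notMem_of_validatesKM hkmX (hd.preimage hf)
        ((isLowerSet_downLe d).preimage hmono) hz₀
    refine ⟨z, sq_of_sq_of_le hreflX hxz₀ hz₀z, ?_⟩
    rcases (hreflY (f z) c).1 hzc with hfz | hfz
    · exact hfz ▸ hc
    · obtain ⟨w, hzw, hw⟩ := (hBFC z).1 ⟨c, ⟨c, hc, le_rfl⟩, hfz⟩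
      exact absurd hw (hzmax w hzw)
  · rintro ⟨z, hxz, hz⟩
    obtain ⟨y, ⟨c, hc, hyc⟩, hxy⟩ := (hBFC x).2 ⟨z, hxz, f z, hz, le_rfl⟩
    exact ⟨c, hc, sq_of_sq_of_le hreflY hxy hyc⟩

theorem bfc_of_bfc_downsets_km_general {X Y : Type*}
    [TopologicalSpace X] [PartialOrder X]
    [TopologicalSpace Y] [PartialOrder Y]
    (sqX : X → X → Prop) (sqY : Y → Y → Prop)
    -- X is a modalized Esakia space
    (hreflX : ∀ x y : X, x ≤ y ↔ x = y ∨ sqX x y)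
    -- X validates the KM axiom
    (hkmX : ∀ U : Set X, IsClopen U → (∀ x y, x ∈ U → x ≤ y → y ∈ U) →
      ∀ x : X, (∀ y, x ≤ y → (y ∈ boxSet sqX U → y ∈ U)) → x ∈ U)
    -- Y is a modalized Esakia space
    (hdownClopenY : ∀ U : Set Y, IsClopen U → IsClopen {x | ∃ y ∈ U, x ≤ y})
    (hreflY : ∀ x y : Y, x ≤ y ↔ x = y ∨ sqY x y)
    -- f is continuous and ≤-preserving
    (f : X → Y) (hf : Continuous f) (hmono : ∀ x y : X, x ≤ y → f x ≤ f y)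
    (D : Set (Set Y)) (hDclopen : ∀ d ∈ D, IsClopen d)
    -- f satisfies the BFC^⊏ for E = {↓_≤ d : d ∈ D}
    (hBFCE : ∀ (x : X), ∀ d ∈ D,
      ((∃ y ∈ downLe d, sqY (f x) y) ↔ (∃ z : X, sqX x z ∧ f z ∈ downLe d))) :
    -- then f satisfies the BFC^⊏ for D
    ∀ (x : X), ∀ d ∈ D,
      ((∃ y ∈ d, sqY (f x) y) ↔ (∃ z : X, sqX x z ∧ f z ∈ d)) :=
  fun x d hd =>
    SatisfiesBFC.of_downLe hreflX hkmX hreflY hf (fun a b => hmono a b)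
      (hdownClopenY d (hDclopen d hd)) (fun x' => hBFCE x' d hd) x

/-- For a continuous `≤`-preserving map `f` between KM-spaces
and a finite family `D` of clopens of `Y`, if `f` satisfies the BFC^⊏ for
`E = {↓_≤ d : d ∈ D}`, then `f` satisfies the BFC^⊏ for `D`. -/
theorem bfc_of_bfc_downsets_km {X Y : Type*}
    [TopologicalSpace X] [CompactSpace X] [T2Space X] [PartialOrder X]
    [TopologicalSpace Y] [CompactSpace Y] [T2Space Y] [PartialOrder Y]
    (sqX : X → X → Prop) (sqY : Y → Y → Prop)
    -- X is a modalized Esakia space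
    (hbasisX : ∀ (x : X) (U : Set X), IsOpen U → x ∈ U →
      ∃ V : Set X, IsClopen V ∧ x ∈ V ∧ V ⊆ U)
    (hupClosedX : ∀ x : X, IsClosed {y | x ≤ y})
    (hdownClopenX : ∀ U : Set X, IsClopen U → IsClopen {x | ∃ y ∈ U, x ≤ y})
    (hboxClopenX : ∀ U : Set X, IsClopen U → (∀ x y, x ∈ U → x ≤ y → y ∈ U) →
      IsClopen (boxSet sqX U))
    (hboxUpsetX : ∀ U : Set X, IsClopen U → (∀ x y, x ∈ U → x ≤ y → y ∈ U) →
      (∀ x y, x ∈ boxSet sqX U → x ≤ y → y ∈ boxSet sqX U))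
    (hreflX : ∀ x y : X, x ≤ y ↔ x = y ∨ sqX x y)
    -- X validates the KM axiom
    (hkmX : ∀ U : Set X, IsClopen U → (∀ x y, x ∈ U → x ≤ y → y ∈ U) →
      ∀ x : X, (∀ y, x ≤ y → (y ∈ boxSet sqX U → y ∈ U)) → x ∈ U)
    -- Y is a modalized Esakia space
    (hbasisY : ∀ (y : Y) (U : Set Y), IsOpen U → y ∈ U →
      ∃ V : Set Y, IsClopen V ∧ y ∈ V ∧ V ⊆ U)
    (hupClosedY : ∀ x : Y, IsClosed {y | x ≤ y})
    (hdownClopenY : ∀ U : Set Y, IsClopen U → IsClopen {x | ∃ y ∈ U, x ≤ y})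
    (hboxClopenY : ∀ U : Set Y, IsClopen U → (∀ x y, x ∈ U → x ≤ y → y ∈ U) →
      IsClopen (boxSet sqY U))
    (hboxUpsetY : ∀ U : Set Y, IsClopen U → (∀ x y, x ∈ U → x ≤ y → y ∈ U) →
      (∀ x y, x ∈ boxSet sqY U → x ≤ y → y ∈ boxSet sqY U))
    (hreflY : ∀ x y : Y, x ≤ y ↔ x = y ∨ sqY x y)
    -- Y validates the KM axiom
    (hkmY : ∀ U : Set Y, IsClopen U → (∀ x y, x ∈ U → x ≤ y → y ∈ U) →
      ∀ x : Y, (∀ y, x ≤ y → (y ∈ boxSet sqY U → y ∈ U)) → x ∈ U)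
    -- f is continuous and ≤-preserving
    (f : X → Y) (hf : Continuous f) (hmono : ∀ x y : X, x ≤ y → f x ≤ f y)
    (D : Set (Set Y)) (hDfin : D.Finite) (hDclopen : ∀ d ∈ D, IsClopen d)
    -- f satisfies the BFC^⊏ for E = {↓_≤ d : d ∈ D}
    (hBFCE : ∀ (x : X), ∀ d ∈ D,
      ((∃ y ∈ downLe d, sqY (f x) y) ↔ (∃ z : X, sqX x z ∧ f z ∈ downLe d))) :
    -- then f satisfies the BFC^⊏ for D
    ∀ (x : X), ∀ d ∈ D,
      ((∃ y ∈ d, sqY (f x) y) ↔ (∃ z : X, sqX x z ∧ f z ∈ d)) :=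
  bfc_of_bfc_downsets_km_general sqX sqY hreflX hkmX hdownClopenY hreflY f hf hmono D hDclopen hBFCE
end

section
/- Let H be a Heyting algebra with a fronton operator box, and let A and D be finite subsets of H. Then there exists a finite subset K ⊆ H containing A ∪ D ∪ {box d : d ∈ D} as well as ⊥ and ⊤, closed under ⊓ and ⊔, such that: (i) for all a, b ∈ K, the element a ⇝ b := ⋁{c ∈ K : a ⊓ c ≤ b} (a finite join computed in H) belongs to K and is a Heyting implication on the finite distributive lattice K, and whenever (a ⇨ b) ∈ K one has a ⇝ b = a ⇨ b; (ii) the map ⊗ : K → K defined by ⊗k := ⋀{b ∈ K : (b ⇝ k) ≤ b} (a finite meet of elements of K, hence in K) is a fronton operator on the Heyting algebra (K, ⊓, ⊔, ⇝, ⊥, ⊤), and ⊗d = box d for every d ∈ D. -/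
attribute [local instance] Classical.propDecidable

/-- The implication of the finite sublattice `K`:
`a ⇝ b := ⋁ {c ∈ K : a ⊓ c ≤ b}` (a finite join computed in `H`). -/
noncomputable def impK {H : Type*} [HeytingAlgebra H] (K : Finset H) (a b : H) : H :=
  (K.filter fun c => a ⊓ c ≤ b).sup id

/-- The fronton operator of the finite sublattice `K`:
`⊗k := ⋀ {b ∈ K : (b ⇝ k) ≤ b}` (a finite meet computed in `H`). -/
noncomputable def boxK {H : Type*} [HeytingAlgebra H] (K : Finset H) (k : H) : H :=
  (K.filter fun b => impK K b k ≤ b).inf id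

/-!
Take for `K` the sublattice of `H` generated by `A`, `D`, `box[D]`, `⊥`, `⊤` and the elements
`box d ⊓ (y ⇨ d)` with `d ∈ D` and `y` one of the former generators. Finitely generated
distributive lattices are finite, so `⇝` and `⊗` make sense, and the Heyting and fronton laws on
`K` follow from the Galois connection of `⇝` alone; the only subtle one is that
`{b ∈ K : b ⇝ k ≤ b}` is closed under meets, a Löb-style argument.

The content is `⊗d = box d`. Löb's law gives `box d ⇝ d ≤ box d ⇨ d ≤ d ≤ box d`, so
`⊗d ≤ box d`. Conversely, if `b ∈ K` has a witness `c ∈ K` with `b ⊓ c ≤ d` and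
`box d ≤ b ⊔ c`, then `b ⇝ d ≤ b` forces `c ≤ b`, hence `box d ≤ b`. Witnesses combine along
meets and joins, so only generators need one: the frontal law provides `box d ⊓ (g ⇨ d)` for
the first generators `g`, and for an added generator `box d' ⊓ (y ⇨ d')` the element
`box d ⊓ (box d' ⇨ d) ⊔ y ⊓ (box d ⊓ (d' ⇨ d))` works and already lies in `K`.
-/

section FiniteSublattice

variable {H : Type*} [HeytingAlgebra H] {K : Finset H} {a b c k : H}

lemma impK_le_himp (K : Finset H) (a b : H) : impK K a b ≤ a ⇨ b :=
  Finset.sup_le fun c hc => le_himp_iff.mpr <| by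
    simpa only [inf_comm, id] using (Finset.mem_filter.mp hc).2

lemma inf_impK_le (K : Finset H) (a b : H) : a ⊓ impK K a b ≤ b :=
  calc a ⊓ impK K a b ≤ a ⊓ (a ⇨ b) := inf_le_inf_left a (impK_le_himp K a b)
    _ ≤ b := inf_himp_le

lemma le_impK (hc : c ∈ K) (h : a ⊓ c ≤ b) : c ≤ impK K a b :=
  Finset.le_sup (f := id) (Finset.mem_filter.mpr ⟨hc, h⟩)

lemma le_impK_iff (hc : c ∈ K) : c ≤ impK K a b ↔ a ⊓ c ≤ b :=
  ⟨fun h => (inf_le_inf_left a h).trans (inf_impK_le K a b), le_impK hc⟩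

lemma impK_eq_himp (h : (a ⇨ b) ∈ K) : impK K a b = a ⇨ b :=
  (impK_le_himp K a b).antisymm (le_impK h inf_himp_le)

lemma impK_mem (hbot : ⊥ ∈ K) (hsup : SupClosed (K : Set H)) (a b : H) : impK K a b ∈ K :=
  Finset.sup_mem (K : Set H) hbot (fun _ hx _ hy => hsup hx hy) _ _
    fun _ hx => (Finset.mem_filter.mp hx).1

lemma impK_mono_right (hbot : ⊥ ∈ K) (hsup : SupClosed (K : Set H)) {b b' : H} (h : b ≤ b') :
    impK K a b ≤ impK K a b' :=
  le_impK (impK_mem hbot hsup a b) ((inf_impK_le K a b).trans h)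

lemma impK_inf_impK_le (hbot : ⊥ ∈ K) (hsup : SupClosed (K : Set H))
    (hinf : InfClosed (K : Set H)) (a b c : H) : impK K c a ⊓ impK K c b ≤ impK K c (a ⊓ b) := by
  refine le_impK (hinf (impK_mem hbot hsup c a) (impK_mem hbot hsup c b)) ?_
  calc c ⊓ (impK K c a ⊓ impK K c b) ≤ c ⊓ (c ⇨ a ⊓ b) := by
        rw [himp_inf_distrib]
        exact inf_le_inf_left c (inf_le_inf (impK_le_himp K c a) (impK_le_himp K c b))
    _ ≤ a ⊓ b := inf_himp_le

lemma impK_inf_le_inf (hbot : ⊥ ∈ K) (hsup : SupClosed (K : Set H))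
    (hinf : InfClosed (K : Set H)) {b₁ b₂ : H} (hb₂K : b₂ ∈ K)
    (hb₁ : impK K b₁ k ≤ b₁) (hb₂ : impK K b₂ k ≤ b₂) :
    impK K (b₁ ⊓ b₂) k ≤ b₁ ⊓ b₂ := by
  set x := impK K (b₁ ⊓ b₂) k
  have hxK : x ∈ K := impK_mem hbot hsup _ _
  have hx : b₁ ⊓ b₂ ⊓ x ≤ k := inf_impK_le K _ _
  have hx₁ : b₂ ⊓ x ≤ b₁ := (le_impK (hinf hb₂K hxK) (by order)).trans hb₁
  have hx₂ : x ≤ b₂ := (le_impK hxK (by order)).trans hb₂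
  exact le_inf ((le_impK hxK (by order)).trans hb₁) hx₂

lemma boxK_mem_and_impK_le (hbot : ⊥ ∈ K) (htop : ⊤ ∈ K) (hsup : SupClosed (K : Set H))
    (hinf : InfClosed (K : Set H)) (k : H) :
    boxK K k ∈ K ∧ impK K (boxK K k) k ≤ boxK K k :=
  Finset.inf_mem {b | b ∈ K ∧ impK K b k ≤ b} ⟨htop, le_top⟩
    (fun _ hb₁ _ hb₂ => ⟨hinf hb₁.1 hb₂.1, impK_inf_le_inf hbot hsup hinf hb₂.1 hb₁.2 hb₂.2⟩)
    _ _ fun _ => Finset.mem_filter.mp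

lemma boxK_le (hb : b ∈ K) (h : impK K b k ≤ b) : boxK K k ≤ b :=
  Finset.inf_le (f := id) (Finset.mem_filter.mpr ⟨hb, h⟩)

lemma le_boxK (ha : a ∈ K) : a ≤ boxK K a :=
  Finset.le_inf fun _ hb => (le_impK ha inf_le_right).trans (Finset.mem_filter.mp hb).2

lemma boxK_top (htop : ⊤ ∈ K) : boxK K ⊤ = ⊤ :=
  le_top.antisymm (le_boxK htop)

lemma impK_boxK_le (hbot : ⊥ ∈ K) (htop : ⊤ ∈ K) (hsup : SupClosed (K : Set H))
    (hinf : InfClosed (K : Set H)) (a : H) : impK K (boxK K a) a ≤ a :=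
  (le_inf (boxK_mem_and_impK_le hbot htop hsup hinf a).2 le_rfl).trans (inf_impK_le K _ _)

lemma boxK_le_sup_impK (hbot : ⊥ ∈ K) (hsup : SupClosed (K : Set H)) (hb : b ∈ K) :
    boxK K a ≤ b ⊔ impK K b a := by
  have hmem : b ⊔ impK K b a ∈ K := hsup hb (impK_mem hbot hsup b a)
  refine boxK_le hmem (le_sup_right.trans' (le_impK (impK_mem hbot hsup _ _) ?_))
  exact (inf_le_inf_right _ le_sup_left).trans (inf_impK_le K _ _)

lemma boxK_mono (hbot : ⊥ ∈ K) (hsup : SupClosed (K : Set H)) (h : a ≤ b) :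
    boxK K a ≤ boxK K b :=
  Finset.le_inf fun c hc => by
    obtain ⟨hcK, hc⟩ := Finset.mem_filter.mp hc
    exact boxK_le hcK ((impK_mono_right hbot hsup h).trans hc)

lemma boxK_inf (hbot : ⊥ ∈ K) (hsup : SupClosed (K : Set H)) (hinf : InfClosed (K : Set H))
    (a b : H) : boxK K (a ⊓ b) = boxK K a ⊓ boxK K b := by
  refine le_antisymm
    (le_inf (boxK_mono hbot hsup inf_le_left) (boxK_mono hbot hsup inf_le_right))
    (Finset.le_inf fun c hc => ?_)
  obtain ⟨hcK, hc⟩ := Finset.mem_filter.mp hc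
  calc boxK K a ⊓ boxK K b ≤ (c ⊔ impK K c a) ⊓ (c ⊔ impK K c b) :=
        inf_le_inf (boxK_le_sup_impK hbot hsup hcK) (boxK_le_sup_impK hbot hsup hcK)
    _ = c ⊔ impK K c a ⊓ impK K c b := (sup_inf_left c _ _).symm
    _ ≤ c ⊔ impK K c (a ⊓ b) := sup_le_sup_left (impK_inf_impK_le hbot hsup hinf a b c) c
    _ ≤ c := sup_le le_rfl hc

end FiniteSublattice

section ComplBetween

variable {α : Type*} [DistribLattice α] {d p b b₁ b₂ c₁ c₂ : α}

lemma le_of_le_sup_of_inf_le_of_inf_le {x y z w : α} (h : x ≤ y ⊔ z) (hy : x ⊓ y ≤ w)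
    (hz : x ⊓ z ≤ w) : x ≤ w :=
  calc x = x ⊓ y ⊔ x ⊓ z := by rw [← inf_sup_left, inf_eq_left.mpr h]
    _ ≤ w := sup_le hy hz

def IsComplBetween (d p b c : α) : Prop := b ⊓ c ≤ d ∧ p ≤ b ⊔ c

lemma IsComplBetween.inf (h₁ : IsComplBetween d p b₁ c₁) (h₂ : IsComplBetween d p b₂ c₂) :
    IsComplBetween d p (b₁ ⊓ b₂) (c₁ ⊔ c₂) := by
  refine ⟨?_, ?_⟩
  · rw [inf_sup_left]
    exact sup_le ((inf_le_inf_right _ inf_le_left).trans h₁.1)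
      ((inf_le_inf_right _ inf_le_right).trans h₂.1)
  · calc p ≤ (b₁ ⊔ (c₁ ⊔ c₂)) ⊓ (b₂ ⊔ (c₁ ⊔ c₂)) :=
          le_inf (h₁.2.trans (sup_le_sup_left le_sup_left _))
            (h₂.2.trans (sup_le_sup_left le_sup_right _))
      _ = b₁ ⊓ b₂ ⊔ (c₁ ⊔ c₂) := (sup_inf_right _ _ _).symm

lemma IsComplBetween.sup (h₁ : IsComplBetween d p b₁ c₁) (h₂ : IsComplBetween d p b₂ c₂) :
    IsComplBetween d p (b₁ ⊔ b₂) (c₁ ⊓ c₂) := by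
  refine ⟨?_, ?_⟩
  · rw [inf_sup_right]
    exact sup_le ((inf_le_inf_left _ inf_le_left).trans h₁.1)
      ((inf_le_inf_left _ inf_le_right).trans h₂.1)
  · calc p ≤ (b₁ ⊔ b₂ ⊔ c₁) ⊓ (b₁ ⊔ b₂ ⊔ c₂) :=
          le_inf (h₁.2.trans (sup_le_sup_right le_sup_left _))
            (h₂.2.trans (sup_le_sup_right le_sup_right _))
      _ = b₁ ⊔ b₂ ⊔ c₁ ⊓ c₂ := (sup_inf_left _ _ _).symm

lemma exists_isComplBetween_of_mem_latticeClosure {S : Set α}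
    (hS : ∀ g ∈ S, ∃ c ∈ latticeClosure S, IsComplBetween d p g c) (hb : b ∈ latticeClosure S) :
    ∃ c ∈ latticeClosure S, IsComplBetween d p b c :=
  latticeClosure_sup_inf_induction (fun b _ => ∃ c ∈ latticeClosure S, IsComplBetween d p b c) hS
    (fun _ _ _ _ ⟨_, hc₁, h₁⟩ ⟨_, hc₂, h₂⟩ =>
      ⟨_, isSublattice_latticeClosure.infClosed hc₁ hc₂, h₁.sup h₂⟩)
    (fun _ _ _ _ ⟨_, hc₁, h₁⟩ ⟨_, hc₂, h₂⟩ =>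
      ⟨_, isSublattice_latticeClosure.supClosed hc₁ hc₂, h₁.inf h₂⟩) hb

end ComplBetween

section Fronton

variable {H : Type*} [HeytingAlgebra H] {K : Finset H} {k p : H}

lemma le_boxK_of_forall_isComplBetween (h : ∀ b ∈ K, ∃ c ∈ K, IsComplBetween k p b c) :
    p ≤ boxK K k :=
  Finset.le_inf fun b hb => by
    obtain ⟨hbK, hb⟩ := Finset.mem_filter.mp hb
    obtain ⟨c, hcK, hbc, hp⟩ := h b hbK
    exact hp.trans (sup_le le_rfl ((le_impK hcK hbc).trans hb))

lemma boxK_eq_of_forall_isComplBetween (hpK : p ∈ K) (hp : (p ⇨ k) ≤ p)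
    (h : ∀ b ∈ K, ∃ c ∈ K, IsComplBetween k p b c) : boxK K k = p :=
  (boxK_le hpK ((impK_le_himp K p k).trans hp)).antisymm (le_boxK_of_forall_isComplBetween h)

variable {box : H → H} (hFront : ∀ a b : H, box a ≤ b ⊔ (b ⇨ a))
include hFront

lemma isComplBetween_box_inf_himp (d b : H) : IsComplBetween d (box d) b (box d ⊓ (b ⇨ d)) :=
  ⟨(inf_le_inf_left b inf_le_right).trans inf_himp_le,
    le_of_le_sup_of_inf_le_of_inf_le (hFront d b) (inf_le_right.trans le_sup_left) le_sup_right⟩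

lemma isComplBetween_box_inf_himp_of_le_box {d : H} (hd : d ≤ box d) (d' y : H) :
    IsComplBetween d (box d) (box d' ⊓ (y ⇨ d'))
      (box d ⊓ (box d' ⇨ d) ⊔ y ⊓ (box d ⊓ (d' ⇨ d))) := by
  set n := box d' ⊓ (y ⇨ d')
  have hd' : d' ≤ y ⇨ d' := le_himp_iff.mpr inf_le_left
  have hdx : d ≤ box d ⊓ (box d' ⇨ d) := le_inf hd (le_himp_iff.mpr inf_le_left)
  refine ⟨?_, ?_⟩
  · rw [inf_sup_left]
    refine sup_le ?_ ?_
    · calc n ⊓ (box d ⊓ (box d' ⇨ d)) ≤ box d' ⊓ (box d' ⇨ d) := by order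
        _ ≤ d := inf_himp_le
    · calc n ⊓ (y ⊓ (box d ⊓ (d' ⇨ d))) ≤ y ⊓ (y ⇨ d') ⊓ (d' ⇨ d) := by order
        _ ≤ d' ⊓ (d' ⇨ d) := inf_le_inf_right _ inf_himp_le
        _ ≤ d := inf_himp_le
  · -- Bound the frontal witness `box d ⊓ (n ⇨ d)` of `n` by the proposed one, splitting it
    -- along `box d' ⊔ (box d' ⇨ d)` and then along `y ⊔ (y ⇨ d')`.
    refine (isComplBetween_box_inf_himp hFront d n).2.trans (sup_le_sup_left ?_ n)
    set q := box d ⊓ (n ⇨ d) ⊓ box d'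
    have hnq : n ⊓ q ≤ d := (by order : n ⊓ q ≤ n ⊓ (n ⇨ d)).trans inf_himp_le
    have hqy : q ⊓ y ⊓ d' ≤ d := (by order : q ⊓ y ⊓ d' ≤ n ⊓ q).trans hnq
    have hq_le : q ≤ box d ⊓ (box d' ⇨ d) ⊔ y ⊓ (box d ⊓ (d' ⇨ d)) := by
      refine le_of_le_sup_of_inf_le_of_inf_le (inf_le_right.trans (hFront d' y)) ?_ ?_
      · exact le_sup_of_le_right (le_inf inf_le_right (le_inf (by order) (le_himp_iff.mpr hqy)))
      · exact le_sup_of_le_left (((by order : q ⊓ (y ⇨ d') ≤ n ⊓ q).trans hnq).trans hdx)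
    exact le_of_le_sup_of_inf_le_of_inf_le (inf_le_left.trans (hFront d (box d'))) hq_le
      (le_sup_of_le_left (by order))

end Fronton

section Prefiltration

variable {H : Type*} [HeytingAlgebra H] (box : H → H) (A D : Finset H)

def prefiltrationBase : Set H := ↑A ∪ ↑D ∪ box '' ↑D ∪ {⊥, ⊤}

def prefiltrationGenerators : Set H :=
  prefiltrationBase box A D ∪ Set.image2 (fun d y => box d ⊓ (y ⇨ d)) ↑D (prefiltrationBase box A D)

lemma box_mem_prefiltrationBase {d : H} (hd : d ∈ D) : box d ∈ prefiltrationBase box A D :=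
  Or.inl (Or.inr (Set.mem_image_of_mem box hd))

lemma prefiltrationBase_finite : (prefiltrationBase box A D).Finite :=
  ((A.finite_toSet.union D.finite_toSet).union (D.finite_toSet.image box)).union (Set.toFinite _)

lemma prefiltrationGenerators_finite : (prefiltrationGenerators box A D).Finite :=
  (prefiltrationBase_finite box A D).union
    (D.finite_toSet.image2 _ (prefiltrationBase_finite box A D))

noncomputable def prefiltration : Finset H :=
  (prefiltrationGenerators_finite box A D).latticeClosure.toFinset

lemma coe_prefiltration :
    (prefiltration box A D : Set H) = latticeClosure (prefiltrationGenerators box A D) :=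
  Set.Finite.coe_toFinset _

lemma isSublattice_prefiltration : IsSublattice (prefiltration box A D : Set H) := by
  rw [coe_prefiltration]
  exact isSublattice_latticeClosure

lemma prefiltrationGenerators_subset : prefiltrationGenerators box A D ⊆ prefiltration box A D := by
  rw [coe_prefiltration]
  exact subset_latticeClosure

variable {box A D} (hFront : ∀ a b : H, box a ≤ b ⊔ (b ⇨ a)) (hIncr : ∀ a : H, a ≤ box a)
include hFront hIncr

lemma exists_isComplBetween_prefiltration {d b : H} (hd : d ∈ D)
    (hb : b ∈ prefiltration box A D) :
    ∃ c ∈ prefiltration box A D, IsComplBetween d (box d) b c := by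
  simp only [← Finset.mem_coe, coe_prefiltration] at hb ⊢
  have hL := isSublattice_latticeClosure (s := prefiltrationGenerators box A D)
  have hgen : ∀ y ∈ prefiltrationBase box A D,
      box d ⊓ (y ⇨ d) ∈ latticeClosure (prefiltrationGenerators box A D) :=
    fun y hy => subset_latticeClosure (Or.inr ⟨d, hd, y, hy, rfl⟩)
  refine exists_isComplBetween_of_mem_latticeClosure (fun g hg => ?_) hb
  rcases hg with hg | ⟨d', hd', y, hy, rfl⟩
  · exact ⟨_, hgen g hg, isComplBetween_box_inf_himp hFront d g⟩
  · refine ⟨_, hL.supClosed (hgen (box d') (box_mem_prefiltrationBase box A D hd'))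
      (hL.infClosed (subset_latticeClosure (Or.inl hy))
        (hgen d' (by simp [prefiltrationBase, hd']))),
      isComplBetween_box_inf_himp_of_le_box hFront (hIncr d) d' y⟩

lemma boxK_prefiltration (hLob : ∀ a : H, (box a ⇨ a) ≤ a) {d : H} (hd : d ∈ D) :
    boxK (prefiltration box A D) d = box d :=
  boxK_eq_of_forall_isComplBetween
    (prefiltrationGenerators_subset box A D (Or.inl (box_mem_prefiltrationBase box A D hd)))
    ((hLob d).trans (hIncr d)) fun _ hb => exists_isComplBetween_prefiltration hFront hIncr hd hb

end Prefiltration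

theorem prefiltration_exists_general {H : Type*} [HeytingAlgebra H] (box : H → H)
    (hIncr : ∀ a : H, a ≤ box a)
    (hFront : ∀ a b : H, box a ≤ b ⊔ (b ⇨ a))
    (hLob : ∀ a : H, (box a ⇨ a) ≤ a)
    (A D : Finset H) :
    ∃ K : Finset H,
      A ⊆ K ∧ D ⊆ K ∧ (∀ d ∈ D, box d ∈ K)
      ∧ (⊥ : H) ∈ K ∧ (⊤ : H) ∈ K
      ∧ (∀ a ∈ K, ∀ b ∈ K, a ⊓ b ∈ K)
      ∧ (∀ a ∈ K, ∀ b ∈ K, a ⊔ b ∈ K)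
      -- (i) ⇝ is a Heyting implication on K, agreeing with ⇨ when possible
      ∧ (∀ a ∈ K, ∀ b ∈ K, impK K a b ∈ K)
      ∧ (∀ a ∈ K, ∀ b ∈ K, ∀ c ∈ K, (c ≤ impK K a b ↔ a ⊓ c ≤ b))
      ∧ (∀ a ∈ K, ∀ b ∈ K, (a ⇨ b) ∈ K → impK K a b = a ⇨ b)
      -- (ii) ⊗ is a fronton operator on (K, ⊓, ⊔, ⇝, ⊥, ⊤) agreeing with box on D
      ∧ (∀ k ∈ K, boxK K k ∈ K)
      ∧ boxK K ⊤ = ⊤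
      ∧ (∀ a ∈ K, ∀ b ∈ K, boxK K (a ⊓ b) = boxK K a ⊓ boxK K b)
      ∧ (∀ a ∈ K, a ≤ boxK K a)
      ∧ (∀ a ∈ K, ∀ b ∈ K, boxK K a ≤ b ⊔ impK K b a)
      ∧ (∀ a ∈ K, impK K (boxK K a) a ≤ a)
      ∧ (∀ d ∈ D, boxK K d = box d) := by
  set K := prefiltration box A D
  have hbase : ∀ x ∈ prefiltrationBase box A D, x ∈ K :=
    fun x hx => prefiltrationGenerators_subset box A D (Or.inl hx)
  have hbot : (⊥ : H) ∈ K := hbase ⊥ (by simp [prefiltrationBase])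
  have htop : (⊤ : H) ∈ K := hbase ⊤ (by simp [prefiltrationBase])
  obtain ⟨hsup, hinf⟩ := isSublattice_prefiltration box A D
  exact ⟨K, fun a ha => hbase a (by simp [prefiltrationBase, ha]),
    fun d hd => hbase d (by simp [prefiltrationBase, hd]),
    fun d hd => hbase (box d) (box_mem_prefiltrationBase box A D hd), hbot, htop,
    fun _ ha _ hb => hinf ha hb, fun _ ha _ hb => hsup ha hb,
    fun a _ b _ => impK_mem hbot hsup a b, fun _ _ _ _ _ hc => le_impK_iff hc,
    fun _ _ _ _ => impK_eq_himp, fun k _ => (boxK_mem_and_impK_le hbot htop hsup hinf k).1,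
    boxK_top htop, fun a _ b _ => boxK_inf hbot hsup hinf a b, fun _ ha => le_boxK ha,
    fun _ _ _ hb => boxK_le_sup_impK hbot hsup hb, fun a _ => impK_boxK_le hbot htop hsup hinf a,
    fun _ hd => boxK_prefiltration hFront hIncr hLob hd⟩

/-- Given a fronton `(H, box)` and finite subsets `A, D ⊆ H`,
there is a finite bounded sublattice `K` of `H` containing `A`, `D` and
`box[D]` such that `⇝` is a Heyting implication on `K` agreeing with `⇨` on
pairs whose implication lies in `K`, and `⊗` is a fronton operator on `K`
agreeing with `box` on `D`. -/
theorem prefiltration_exists {H : Type*} [HeytingAlgebra H] (box : H → H)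
    (hTop : box ⊤ = ⊤)
    (hMeet : ∀ a b : H, box (a ⊓ b) = box a ⊓ box b)
    (hIncr : ∀ a : H, a ≤ box a)
    (hFront : ∀ a b : H, box a ≤ b ⊔ (b ⇨ a))
    (hLob : ∀ a : H, (box a ⇨ a) ≤ a)
    (A D : Finset H) :
    ∃ K : Finset H,
      A ⊆ K ∧ D ⊆ K ∧ (∀ d ∈ D, box d ∈ K)
      ∧ (⊥ : H) ∈ K ∧ (⊤ : H) ∈ K
      ∧ (∀ a ∈ K, ∀ b ∈ K, a ⊓ b ∈ K)
      ∧ (∀ a ∈ K, ∀ b ∈ K, a ⊔ b ∈ K)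
      -- (i) ⇝ is a Heyting implication on K, agreeing with ⇨ when possible
      ∧ (∀ a ∈ K, ∀ b ∈ K, impK K a b ∈ K)
      ∧ (∀ a ∈ K, ∀ b ∈ K, ∀ c ∈ K, (c ≤ impK K a b ↔ a ⊓ c ≤ b))
      ∧ (∀ a ∈ K, ∀ b ∈ K, (a ⇨ b) ∈ K → impK K a b = a ⇨ b)
      -- (ii) ⊗ is a fronton operator on (K, ⊓, ⊔, ⇝, ⊥, ⊤) agreeing with box on D
      ∧ (∀ k ∈ K, boxK K k ∈ K)
      ∧ boxK K ⊤ = ⊤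
      ∧ (∀ a ∈ K, ∀ b ∈ K, boxK K (a ⊓ b) = boxK K a ⊓ boxK K b)
      ∧ (∀ a ∈ K, a ≤ boxK K a)
      ∧ (∀ a ∈ K, ∀ b ∈ K, boxK K a ≤ b ⊔ impK K b a)
      ∧ (∀ a ∈ K, impK K (boxK K a) a ≤ a)
      ∧ (∀ d ∈ D, boxK K d = box d) :=
  prefiltration_exists_general box hIncr hFront hLob A D
end

section
/- Let B be a Boolean algebra and L ⊆ B a sublattice containing ⊥ and ⊤ (i.e., L is closed under ⊓ and ⊔ and contains the bounds). Then the Boolean subalgebra of B generated by L is exactly the set of all finite meets ⋀_{i=1}^{n} (aᵢᶜ ⊔ bᵢ) with a₁, …, aₙ, b₁, …, bₙ ∈ L; in particular, every element of the Boolean subalgebra generated by L is a finite meet of elements of the form aᶜ ⊔ b with a, b ∈ L. -/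
/-!
Every element of the Boolean algebra generated by a bounded sublattice `L` is a finite join of
differences `a \ b` with `a, b ∈ L` (`BooleanSubalgebra.mem_closure_iff_sup_sdiff`). Applying this
to the complement of an element and using de Morgan, `(a \ b)ᶜ = aᶜ ⊔ b`, gives the finite meets.
-/

/-- The Boolean subalgebra of `B` generated by a subset `L`: the least subset
of `B` containing `L`, `⊥` and `⊤`, closed under `ᶜ`, `⊓` and `⊔`. -/
def boolClosure {B : Type*} [BooleanAlgebra B] (L : Set B) : Set B :=
  ⋂₀ {S : Set B | L ⊆ S ∧ (⊥ : B) ∈ S ∧ (⊤ : B) ∈ S ∧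
      (∀ a ∈ S, aᶜ ∈ S) ∧ (∀ a ∈ S, ∀ b ∈ S, a ⊓ b ∈ S) ∧
      (∀ a ∈ S, ∀ b ∈ S, a ⊔ b ∈ S)}

open Finset in
theorem Finset.exists_inf_eq_iff_exists_fin {ι α : Type*} [SemilatticeInf α] [OrderTop α]
    (f : ι → α) (x : α) :
    (∃ t : Finset ι, x = t.inf f) ↔ ∃ (n : ℕ) (g : Fin n → ι), x = univ.inf (f ∘ g) := by
  classical
  constructor
  · rintro ⟨t, rfl⟩
    refine ⟨t.card, fun i ↦ t.equivFin.symm i, ?_⟩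
    rw [← inf_image]
    congr
    ext i
    simp only [mem_image, mem_univ, true_and]
    exact ⟨fun hi ↦ ⟨t.equivFin ⟨i, hi⟩, by simp⟩, fun ⟨j, hj⟩ ↦ hj ▸ (t.equivFin.symm j).2⟩
  · rintro ⟨n, g, rfl⟩
    exact ⟨univ.image g, (inf_image _ _ _).symm⟩

theorem BooleanSubalgebra.mem_closure_iff_inf_compl_sup {B : Type*} [BooleanAlgebra B]
    {s : Set B} (hs : IsSublattice s) (hbot : ⊥ ∈ s) (htop : ⊤ ∈ s) {x : B} :
    x ∈ closure s ↔ ∃ t : Finset (s × s), x = t.inf fun p ↦ (p.1 : B)ᶜ ⊔ p.2 := by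
  rw [← compl_mem_iff, mem_closure_iff_sup_sdiff hs hbot htop]
  refine exists_congr fun t ↦ ?_
  rw [compl_eq_comm, Finset.compl_sup, eq_comm]
  simp only [compl_sdiff, himp_eq, sup_comm]

theorem boolClosure_eq_closure {B : Type*} [BooleanAlgebra B] (L : Set B) :
    boolClosure L = BooleanSubalgebra.closure L := by
  refine subset_antisymm (Set.sInter_subset_of_mem ?_) fun x hx S hS ↦ ?_
  · exact ⟨BooleanSubalgebra.subset_closure, BooleanSubalgebra.bot_mem, BooleanSubalgebra.top_mem,
      fun _ ↦ BooleanSubalgebra.compl_mem, fun _ ha _ hb ↦ BooleanSubalgebra.inf_mem ha hb,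
      fun _ ha _ hb ↦ BooleanSubalgebra.sup_mem ha hb⟩
  · obtain ⟨hLS, hbot, -, hcompl, hinf, hsup⟩ := hS
    exact BooleanSubalgebra.mem_closure.1 hx (L := ⟨⟨S, hsup, hinf⟩, hcompl _, hbot⟩) hLS

/-- If `L` is a bounded sublattice of a Boolean algebra `B`,
then the Boolean subalgebra generated by `L` consists exactly of the finite
meets `⋀ᵢ (aᵢᶜ ⊔ bᵢ)` with `aᵢ, bᵢ ∈ L`. -/
theorem boolClosure_eq_meets_of_implications {B : Type*} [BooleanAlgebra B]
    (L : Set B)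
    (hbot : (⊥ : B) ∈ L) (htop : (⊤ : B) ∈ L)
    (hinf : ∀ a ∈ L, ∀ b ∈ L, a ⊓ b ∈ L)
    (hsup : ∀ a ∈ L, ∀ b ∈ L, a ⊔ b ∈ L) :
    boolClosure L =
      {x | ∃ (n : ℕ) (a b : Fin n → B), (∀ i, a i ∈ L) ∧ (∀ i, b i ∈ L) ∧
        x = (Finset.univ : Finset (Fin n)).inf (fun i => (a i)ᶜ ⊔ b i)} := by
  ext x
  rw [boolClosure_eq_closure, SetLike.mem_coe,
    BooleanSubalgebra.mem_closure_iff_inf_compl_sup ⟨hsup, hinf⟩ hbot htop,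
    Finset.exists_inf_eq_iff_exists_fin]
  constructor
  · rintro ⟨n, g, rfl⟩
    exact ⟨n, fun i ↦ (g i).1, fun i ↦ (g i).2, fun i ↦ (g i).1.2, fun i ↦ (g i).2.2, rfl⟩
  · rintro ⟨n, a, b, ha, hb, rfl⟩
    exact ⟨n, fun i ↦ (⟨a i, ha i⟩, ⟨b i, hb i⟩), rfl⟩
end
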